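/- arXiv:2312.06182 — 2 statements merged into one kernel-verified Lean document; each statement's English description precedes it below -/
import Mathlib

section
/- Let P ∈ R^{n×n}, X ∈ R^{n×d} with e = 𝟙/√n and ‖eᵀX‖ ≠ 0. Define ω = ‖eᵀPΠ₂X‖/‖eᵀX‖ and μ₁ = ‖Π₁PX‖_F/‖Π₁X‖_F where Π₁ = 𝟙𝟙ᵀ/n, Π₂ = I−Π₁. If P is row-stochastic (P𝟙 = 𝟙), then μ₁² ≥ (1−ω)². -/
open Matrix BigOperators

noncomputable section

def Pi1 (n : ℕ) : Matrix (Fin n) (Fin n) ℝ := Matrix.of fun _ _ => 1 / (n : ℝ)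

def Pi2 (n : ℕ) : Matrix (Fin n) (Fin n) ℝ := 1 - Pi1 n

def frobSq {m k : Type*} [Fintype m] [Fintype k] (X : Matrix m k ℝ) : ℝ :=
  ∑ i, ∑ j, (X i j) ^ 2

def frob {m k : Type*} [Fintype m] [Fintype k] (X : Matrix m k ℝ) : ℝ :=
  Real.sqrt (frobSq X)

/-- Euclidean norm of a vector. -/
def vnorm {k : Type*} [Fintype k] (v : k → ℝ) : ℝ := Real.sqrt (∑ j, (v j) ^ 2)

/-- `e = 𝟙/√n`. -/
def evec (n : ℕ) : Fin n → ℝ := fun _ => 1 / Real.sqrt n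

lemma vnorm_eq_norm {k : ℕ} (v : Fin k → ℝ) :
    vnorm v = ‖(WithLp.equiv 2 (Fin k → ℝ)).symm v‖ := by
  rw [EuclideanSpace.norm_eq]
  simp [vnorm, sq_abs]

lemma frob_pi1 {n d : ℕ} (hn : 0 < n) (M : Matrix (Fin n) (Fin d) ℝ) :
    frob (Pi1 n * M) = vnorm (Matrix.vecMul (evec n) M) := by
  have hne : (n : ℝ) ≠ 0 := Nat.cast_ne_zero.mpr hn.ne'
  unfold frob vnorm frobSq
  congr 1
  rw [Finset.sum_comm]
  refine Finset.sum_congr rfl fun j _ => ?_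
  simp only [Matrix.mul_apply, Matrix.vecMul, Pi1, Matrix.of_apply, evec,
    dotProduct]
  rw [← Finset.mul_sum, ← Finset.mul_sum, Finset.sum_const, Finset.card_univ,
    Fintype.card_fin, nsmul_eq_mul, mul_pow, mul_pow, div_pow, div_pow,
    one_pow, Real.sq_sqrt (Nat.cast_nonneg n)]
  field_simp

theorem mu1_sq_ge {n d : ℕ} (hn : 0 < n)
    (P : Matrix (Fin n) (Fin n) ℝ) (hP : P *ᵥ (fun _ => (1 : ℝ)) = fun _ => 1)
    (X : Matrix (Fin n) (Fin d) ℝ)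
    (hX : vnorm (Matrix.vecMul (evec n) X) ≠ 0) :
    (1 - vnorm (Matrix.vecMul (evec n) (P * (Pi2 n * X)))
          / vnorm (Matrix.vecMul (evec n) X)) ^ 2
      ≤ (frob (Pi1 n * P * X) / frob (Pi1 n * X)) ^ 2 := by
  have hne : (n : ℝ) ≠ 0 := Nat.cast_ne_zero.mpr hn.ne'
  have hs : Real.sqrt n ≠ 0 := by positivity
  -- P * Pi1 = Pi1
  have hPPi1 : P * Pi1 n = Pi1 n := by
    ext i j
    have h1 : ∑ x : Fin n, P i x = 1 := by
      have := congrFun hP i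
      simpa [Matrix.mulVec, dotProduct] using this
    simp only [Matrix.mul_apply, Pi1, Matrix.of_apply]
    rw [← Finset.sum_mul, h1, one_mul]
  -- vecMul e Pi1 = e
  have hePi1 : Matrix.vecMul (evec n) (Pi1 n) = evec n := by
    ext j
    simp only [Matrix.vecMul, dotProduct, Pi1, Matrix.of_apply, evec]
    rw [Finset.sum_const, Finset.card_univ, Fintype.card_fin, nsmul_eq_mul]
    field_simp
  have hsplit : P * X = Pi1 n * X + P * (Pi2 n * X) := by
    have h : Pi1 n * X + Pi2 n * X = X := by
      rw [← Matrix.add_mul, Pi2, add_sub_cancel, Matrix.one_mul]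
    calc P * X = P * (Pi1 n * X + Pi2 n * X) := by rw [h]
      _ = P * (Pi1 n * X) + P * (Pi2 n * X) := by rw [Matrix.mul_add]
      _ = Pi1 n * X + P * (Pi2 n * X) := by rw [← Matrix.mul_assoc, hPPi1]
  have key : Matrix.vecMul (evec n) (P * X)
      = Matrix.vecMul (evec n) X + Matrix.vecMul (evec n) (P * (Pi2 n * X)) := by
    rw [hsplit, Matrix.vecMul_add, ← Matrix.vecMul_vecMul, hePi1]
  rw [Matrix.mul_assoc, frob_pi1 hn, frob_pi1 hn, key]
  set u := Matrix.vecMul (evec n) X with hu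
  set w := Matrix.vecMul (evec n) (P * (Pi2 n * X)) with hw
  rw [vnorm_eq_norm, vnorm_eq_norm, vnorm_eq_norm] at *
  set u' := (WithLp.equiv 2 (Fin d → ℝ)).symm u
  set w' := (WithLp.equiv 2 (Fin d → ℝ)).symm w
  have hadd : (WithLp.equiv 2 (Fin d → ℝ)).symm (u + w) = u' + w' := rfl
  rw [hadd]
  have hU : 0 < ‖u'‖ := lt_of_le_of_ne (norm_nonneg _) (Ne.symm hX)
  have habs : |‖u'‖ - ‖w'‖| ≤ ‖u' + w'‖ := by
    have h := abs_norm_sub_norm_le u' (-w')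
    rwa [norm_neg, sub_neg_eq_add] at h
  have h2 : (‖u'‖ - ‖w'‖) ^ 2 ≤ ‖u' + w'‖ ^ 2 := by
    rw [← sq_abs]
    exact pow_le_pow_left₀ (abs_nonneg _) habs 2
  have heq : (1 - ‖w'‖ / ‖u'‖) ^ 2 = (‖u'‖ - ‖w'‖) ^ 2 / ‖u'‖ ^ 2 := by
    field_simp
  rw [heq, div_pow]
  gcongr
end
end

section
/- Let ξ₁, ξ₂ be positive random variables with finite positive means, and define η = E[ξ₁]/E[ξ₂] − ξ₁/ξ₂. For all t ∈ [0,1], the event |η| ≥ t implies max{|ξ₁−E[ξ₁]|, |ξ₂−E[ξ₂]|} ≥ γt, where γ = E[ξ₂]²/(E[ξ₁] + 2E[ξ₂]); consequently P(|η| ≥ t) ≤ P(maxᵢ |ξᵢ−E[ξᵢ]| ≥ γt). -/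
open MeasureTheory BigOperators

noncomputable section

/-- for positive random variables `ξ₁, ξ₂` with positive means and
`η = E[ξ₁]/E[ξ₂] - ξ₁/ξ₂`, for all `t ∈ [0,1]` the event `|η| ≥ t` implies
`max |ξ₁ - E[ξ₁]| |ξ₂ - E[ξ₂]| ≥ γt` with `γ = E[ξ₂]²/(E[ξ₁] + 2E[ξ₂])`;
consequently `P(|η| ≥ t) ≤ P(maxᵢ |ξᵢ - E[ξᵢ]| ≥ γt)`. -/
theorem eta_concentration {Ω : Type*} [MeasurableSpace Ω]
    (μ : Measure Ω) [IsProbabilityMeasure μ]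
    (ξ₁ ξ₂ : Ω → ℝ) (hpos1 : ∀ ω, 0 < ξ₁ ω) (hpos2 : ∀ ω, 0 < ξ₂ ω)
    (hint1 : Integrable ξ₁ μ) (hint2 : Integrable ξ₂ μ)
    (E₁ E₂ γ : ℝ) (hE1 : E₁ = ∫ ω, ξ₁ ω ∂μ) (hE2 : E₂ = ∫ ω, ξ₂ ω ∂μ)
    (hE1pos : 0 < E₁) (hE2pos : 0 < E₂)
    (hγ : γ = E₂ ^ 2 / (E₁ + 2 * E₂)) :
    ∀ t ∈ Set.Icc (0 : ℝ) 1,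
      (∀ ω, t ≤ |E₁ / E₂ - ξ₁ ω / ξ₂ ω| →
        γ * t ≤ max |ξ₁ ω - E₁| |ξ₂ ω - E₂|)
      ∧ μ {ω | t ≤ |E₁ / E₂ - ξ₁ ω / ξ₂ ω|}
          ≤ μ {ω | γ * t ≤ max |ξ₁ ω - E₁| |ξ₂ ω - E₂|} := by
  intro t ht
  obtain ⟨ht0, ht1⟩ := ht
  have key : ∀ ω, t ≤ |E₁ / E₂ - ξ₁ ω / ξ₂ ω| →
      γ * t ≤ max |ξ₁ ω - E₁| |ξ₂ ω - E₂| := by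
    intro ω hω
    set M := max |ξ₁ ω - E₁| |ξ₂ ω - E₂| with hM
    have hx2 := hpos2 ω
    have hM0 : 0 ≤ M := le_trans (abs_nonneg _) (le_max_left _ _)
    have hM1 : |ξ₁ ω - E₁| ≤ M := le_max_left _ _
    have hM2 : |ξ₂ ω - E₂| ≤ M := le_max_right _ _
    have h1 := abs_le.mp hM1
    have h2 := abs_le.mp hM2
    -- multiply the inequality by E₂ * ξ₂ ω > 0
    have hden : 0 < E₂ * ξ₂ ω := mul_pos hE2pos hx2
    have heq : (E₁ / E₂ - ξ₁ ω / ξ₂ ω) * (E₂ * ξ₂ ω) = E₁ * ξ₂ ω - E₂ * ξ₁ ω := by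
      field_simp
    have hstep : t * (E₂ * ξ₂ ω) ≤ |E₁ * ξ₂ ω - E₂ * ξ₁ ω| := by
      calc t * (E₂ * ξ₂ ω) ≤ |E₁ / E₂ - ξ₁ ω / ξ₂ ω| * (E₂ * ξ₂ ω) := by
            exact mul_le_mul_of_nonneg_right hω hden.le
        _ = |(E₁ / E₂ - ξ₁ ω / ξ₂ ω) * (E₂ * ξ₂ ω)| := by
            rw [abs_mul, abs_of_pos hden]
        _ = |E₁ * ξ₂ ω - E₂ * ξ₁ ω| := by rw [heq]
    have hbound : |E₁ * ξ₂ ω - E₂ * ξ₁ ω| ≤ (E₁ + E₂) * M := by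
      have : E₁ * ξ₂ ω - E₂ * ξ₁ ω = E₁ * (ξ₂ ω - E₂) - E₂ * (ξ₁ ω - E₁) := by ring
      rw [this]
      calc |E₁ * (ξ₂ ω - E₂) - E₂ * (ξ₁ ω - E₁)|
          ≤ |E₁ * (ξ₂ ω - E₂)| + |E₂ * (ξ₁ ω - E₁)| := abs_sub _ _
        _ = E₁ * |ξ₂ ω - E₂| + E₂ * |ξ₁ ω - E₁| := by
            rw [abs_mul, abs_mul, abs_of_pos hE1pos, abs_of_pos hE2pos]
        _ ≤ E₁ * M + E₂ * M := by
            gcongr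
        _ = (E₁ + E₂) * M := by ring
    have hmain : t * (E₂ * ξ₂ ω) ≤ (E₁ + E₂) * M := le_trans hstep hbound
    have hdpos : 0 < E₁ + 2 * E₂ := by linarith
    rw [hγ, div_mul_eq_mul_div, div_le_iff₀ hdpos]
    nlinarith [mul_nonneg (mul_nonneg ht0 hE2pos.le) hM0,
      mul_le_mul_of_nonneg_left h2.1 (mul_nonneg ht0 hE2pos.le),
      mul_nonneg hM0 (sub_nonneg.mpr ht1)]
  refine ⟨key, measure_mono ?_⟩
  intro ω hω
  exact key ω hω
end
end
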